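/- With L a strongly symmetric ample line bundle of type (1,2,4) on an abelian 3-fold A and the basis s₀,...,s₇ of H⁰(L) constructed from a G'-invariant section s₀ with i(s₀)=s₀ (s₁ = σ'₂ s₀, s₂ = τ'₁ s₀, s₃ = τ'₂ s₀, s₄ = σ'₂τ'₁ s₀, s₅ = σ'₂τ'₂ s₀, s₆ = τ'₁τ'₂ s₀, s₇ = σ'₂τ'₁τ'₂ s₀): the (+1)-eigenspace H⁰(L)⁺_i of the inversion i on H⁰(L) is spanned by s₀,s₁,s₂,s₃,s₄,s₅ (dimension 6), and the (−1)-eigenspace H⁰(L)⁻_i is spanned by s₆,s₇ (dimension 2). -/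

import Mathlib

/-!
Each `sᵢ` is `z • s₀` for a word `z` in the lifts, and `i (z • s₀) = δ₋₁(z) • s₀`. As `(τ'ⱼ)²`
fixes `s₀`, the lifts `τ'ⱼ` and `(τ'ⱼ)⁻¹` agree on `s₀`, so `s₀, …, s₅` are `i`-invariant, while
for `s₆, s₇` commuting `(τ'₁)⁻¹` past `τ'₂` twice costs `e^L(τ₁,τ₂)⁻² = (-i)⁻² = -1`. Thus `i` is
diagonal in the basis `s`, and its `(±1)`-eigenspaces are spanned by the basis vectors with
eigenvalue `±1`.
-/

/-- Abstract model of the theta group `𝒢(L)` of a symmetric ample line bundle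
`L` on an abelian variety, as a central extension `1 → ℂ* → 𝒢(L) → K(L) → 0`
with the Weil form as commutator, together with its weight-one action on
`H⁰(L)`, the action of the inversion `i` (via the normalized isomorphism
`ψ : L ≅ i*L`, `ψ(0) = +1`) and the conjugation `δ₋₁ : z ↦ izi`. -/
structure SymmetricThetaActionSetup where
  /-- the points of the abelian variety `A` -/
  A : Type
  [grpA : AddCommGroup A]
  /-- the fixed group `K(L)` -/
  K : AddSubgroup A
  /-- the theta group `𝒢(L)` -/
  G : Type
  [grpG : Group G]
  /-- the central embedding `ℂ* → 𝒢(L)` -/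
  iota : ℂˣ →* G
  iota_injective : Function.Injective iota
  iota_central : ∀ (c : ℂˣ) (x : G), iota c * x = x * iota c
  /-- the projection `𝒢(L) → K(L)` -/
  proj : G → A
  proj_one : proj 1 = 0
  proj_mul : ∀ x y, proj (x * y) = proj x + proj y
  proj_mem : ∀ x, proj x ∈ K
  proj_surjOn : ∀ a ∈ K, ∃ x, proj x = a
  proj_ker : ∀ x, proj x = 0 ↔ ∃ c, x = iota c
  /-- the Weil form `e^L`, as the commutator form of `𝒢(L)` -/
  weil : A → A → ℂˣ
  weil_comm : ∀ x y : G, x * y = iota (weil (proj x) (proj y)) * (y * x)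
  /-- `δ₋₁ : 𝒢(L) → 𝒢(L)`, `z ↦ izi` -/
  deltaNeg : G → G
  deltaNeg_mul : ∀ x y, deltaNeg (x * y) = deltaNeg x * deltaNeg y
  deltaNeg_invol : ∀ x, deltaNeg (deltaNeg x) = x
  deltaNeg_iota : ∀ c, deltaNeg (iota c) = iota c
  deltaNeg_proj : ∀ x, proj (deltaNeg x) = - proj x
  /-- the form `e^L_* : A₂ → {±1}` of the symmetric bundle `L` -/
  estar : A → ℂˣ
  estar_sq : ∀ a, estar a * estar a = 1
  estar_zero : estar 0 = 1
  /-- Mumford's lemma: `δ₋₁(z) = e^L_*(z)·z` for `z` of order `2`, `z ≠ ±1` -/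
  mumford : ∀ z : G, z * z = 1 → proj z ≠ 0 → deltaNeg z = iota (estar (proj z)) * z
  /-- the space of sections `H⁰(A,L)` -/
  H0 : Type
  [grpH0 : AddCommGroup H0]
  [modH0 : Module ℂ H0]
  [fdH0 : FiniteDimensional ℂ H0]
  /-- the weight-one action of `𝒢(L)` on `H⁰(L)` -/
  act : G →* (H0 ≃ₗ[ℂ] H0)
  act_iota : ∀ (c : ℂˣ) (v : H0), act (iota c) v = (c : ℂ) • v
  /-- the action of the inversion `i` on `H⁰(L)` -/
  inv : H0 ≃ₗ[ℂ] H0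
  inv_invol : ∀ v, inv (inv v) = v
  /-- compatibility: `i ∘ z ∘ i = δ₋₁(z)` on `H⁰(L)` -/
  inv_act : ∀ (z : G) (v : H0), inv (act z (inv v)) = act (deltaNeg z) v

attribute [instance] SymmetricThetaActionSetup.grpA SymmetricThetaActionSetup.grpG
  SymmetricThetaActionSetup.grpH0 SymmetricThetaActionSetup.modH0
  SymmetricThetaActionSetup.fdH0

open Module Submodule

theorem Module.End.eigenspace_eq_span_image {K V ι : Type*} [Field K] [AddCommGroup V]
    [Module K V] (b : Basis ι K V) {f : End K V} {μ : ι → K}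
    (hf : ∀ i, f (b i) = μ i • b i) (a : K) :
    f.eigenspace a = span K (b '' {i | μ i = a}) := by
  have repr_f : ∀ v i, b.repr (f v) i = μ i * b.repr v i := by
    intro v i
    have : (b.coord i).comp f = μ i • b.coord i := b.ext fun j => by
      by_cases hij : j = i
      · subst hij; simp [hf]
      · simp [hf, Finsupp.single_eq_of_ne' hij]
    exact LinearMap.congr_fun this v
  refine le_antisymm (fun v hv => ?_) (span_le.mpr ?_)
  · rw [b.mem_span_image]
    intro i hi
    have := congrArg (b.repr · i) (End.mem_eigenspace_iff.mp hv)
    simp only [repr_f, map_smul, Finsupp.smul_apply, smul_eq_mul] at this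
    exact mul_right_cancel₀ (Finsupp.mem_support_iff.mp hi) this
  · rintro _ ⟨i, rfl, rfl⟩
    exact End.mem_eigenspace_iff.mpr (hf i)

theorem LinearIndependent.finrank_span_image_finset {K V ι : Type*} [Field K] [AddCommGroup V]
    [Module K V] {b : ι → V} (hb : LinearIndependent K b) (S : Finset ι) :
    finrank K (span K (b '' S)) = S.card := by
  rw [Set.image_eq_range,
    finrank_span_eq_card (b := fun i : (S : Set ι) => b i) (hb.comp _ Subtype.val_injective)]
  simp

namespace SymmetricThetaActionSetup

variable (T : SymmetricThetaActionSetup)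

theorem act_mul_apply (x y : T.G) (v : T.H0) : T.act (x * y) v = T.act x (T.act y v) := by
  rw [map_mul]; rfl

theorem act_iota_mul_apply (c : ℂˣ) (x : T.G) (v : T.H0) :
    T.act (T.iota c * x) v = (c : ℂ) • T.act x v := by
  rw [act_mul_apply, act_iota]

theorem act_inv_apply_of_act_sq {x : T.G} {v : T.H0} (hx : T.act (x * x) v = v) :
    T.act x⁻¹ v = T.act x v := by
  nth_rw 1 [← hx]
  rw [← act_mul_apply, inv_mul_cancel_left]

theorem mul_eq_iota_inv_mul_mul (x y : T.G) :
    y * x = T.iota (T.weil (T.proj x) (T.proj y))⁻¹ * (x * y) := by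
  rw [T.weil_comm x y, map_inv, inv_mul_cancel_left]

theorem inv_mul_eq_iota_inv_mul (x y : T.G) :
    x⁻¹ * y = T.iota (T.weil (T.proj x) (T.proj y))⁻¹ * (y * x⁻¹) := by
  set c := T.weil (T.proj x) (T.proj y)
  calc x⁻¹ * y = T.iota c⁻¹ * (x⁻¹ * (T.iota c * (y * x)) * x⁻¹) := by
        rw [← mul_assoc x⁻¹, ← T.iota_central, map_inv]; group
    _ = T.iota c⁻¹ * (y * x⁻¹) := by rw [← T.weil_comm]; group

theorem act_inv_mul_inv_apply {x y : T.G} {v : T.H0} (hx : T.act (x * x) v = v)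
    (hy : T.act (y * y) v = v) :
    T.act (x⁻¹ * y⁻¹) v = ((T.weil (T.proj x) (T.proj y) : ℂ)⁻¹ ^ 2) • T.act (x * y) v := by
  rw [act_mul_apply, act_inv_apply_of_act_sq T hy, ← act_mul_apply, inv_mul_eq_iota_inv_mul,
    act_iota_mul_apply, act_mul_apply, act_inv_apply_of_act_sq T hx, ← act_mul_apply,
    mul_eq_iota_inv_mul_mul, act_iota_mul_apply, smul_smul, Units.val_inv_eq_inv_val, sq]

theorem inv_act_apply_of_inv_eq {v : T.H0} (hv : T.inv v = v) (z : T.G) :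
    T.inv (T.act z v) = T.act (T.deltaNeg z) v := by
  rw [← T.inv_act, hv]

end SymmetricThetaActionSetup

theorem statement7_general (T : SymmetricThetaActionSetup)
    -- lifts `σ'₁, σ'₂, τ'₁, τ'₂ ∈ 𝒢(L)` of generators `σ₁, σ₂, τ₁, τ₂` of
    -- `K(L) ≅ ℤ/2 ⊕ ℤ/4 ⊕ ℤ/2 ⊕ ℤ/4`, with `o(σ'ᵢ) = 2`, `o(τ'ᵢ) = 4`
    (σ₁' σ₂' τ₁' τ₂' : T.G)
    -- values of the Weil form: `e^L(σ₁,σ₂) = -1`, `e^L(τ₁,τ₂) = -i`,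
    -- `e^L(σᵢ,τⱼ) = 1`
    (hw₂ : (T.weil (T.proj τ₁') (T.proj τ₂') : ℂ) = -Complex.I)
    -- normalization of the lifts: `δ₋₁(σ'ⱼ) = σ'ⱼ` and `δ₋₁(τ'ⱼ) = (τ'ⱼ)⁻¹`
    (hδσ₂ : T.deltaNeg σ₂' = σ₂')
    (hδτ₁ : T.deltaNeg τ₁' = τ₁'⁻¹) (hδτ₂ : T.deltaNeg τ₂' = τ₂'⁻¹)
    -- `s₀` is a `G'`-invariant section, `G' = ⟨σ'₁, (τ'₁)², (τ'₂)²⟩`,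
    -- with `i(s₀) = s₀`
    (s₀ : T.H0)
    (hG' : ∀ z ∈ Subgroup.closure ({σ₁', τ₁' * τ₁', τ₂' * τ₂'} : Set T.G),
      T.act z s₀ = s₀)
    (hinvs₀ : T.inv s₀ = s₀)
    -- the resulting basis `s₀, …, s₇` of `H⁰(L)`
    (s : Fin 8 → T.H0)
    (hbasis : LinearIndependent ℂ s ∧ Submodule.span ℂ (Set.range s) = ⊤)
    (hs0 : s 0 = s₀)
    (hs1 : s 1 = T.act σ₂' s₀)
    (hs2 : s 2 = T.act τ₁' s₀)
    (hs3 : s 3 = T.act τ₂' s₀)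
    (hs4 : s 4 = T.act (σ₂' * τ₁') s₀)
    (hs5 : s 5 = T.act (σ₂' * τ₂') s₀)
    (hs6 : s 6 = T.act (τ₁' * τ₂') s₀)
    (hs7 : s 7 = T.act (σ₂' * τ₁' * τ₂') s₀) :
    -- `H⁰(L)⁺_i = ⟨s₀,…,s₅⟩`
    Module.End.eigenspace (↑T.inv : T.H0 →ₗ[ℂ] T.H0) 1
      = Submodule.span ℂ {s 0, s 1, s 2, s 3, s 4, s 5} ∧
    -- `H⁰(L)⁻_i = ⟨s₆,s₇⟩`
    Module.End.eigenspace (↑T.inv : T.H0 →ₗ[ℂ] T.H0) (-1)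
      = Submodule.span ℂ {s 6, s 7} ∧
    Module.finrank ℂ (Module.End.eigenspace (↑T.inv : T.H0 →ₗ[ℂ] T.H0) 1) = 6 ∧
    Module.finrank ℂ (Module.End.eigenspace (↑T.inv : T.H0 →ₗ[ℂ] T.H0) (-1)) = 2 := by
  have hτ₁ : T.act (τ₁' * τ₁') s₀ = s₀ := hG' _ (Subgroup.subset_closure (by simp))
  have hτ₂ : T.act (τ₂' * τ₂') s₀ = s₀ := hG' _ (Subgroup.subset_closure (by simp))
  have hτ₁inv := T.act_inv_apply_of_act_sq hτ₁
  have hτ₂inv := T.act_inv_apply_of_act_sq hτ₂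
  have hτ₁τ₂ : T.act (τ₁'⁻¹ * τ₂'⁻¹) s₀ = -T.act (τ₁' * τ₂') s₀ := by
    rw [T.act_inv_mul_inv_apply hτ₁ hτ₂, hw₂]
    norm_num
  let μ : Fin 8 → ℂ := ![1, 1, 1, 1, 1, 1, -1, -1]
  have hμ : ∀ i, T.inv (s i) = μ i • s i := by
    have hinv := T.inv_act_apply_of_inv_eq hinvs₀
    intro i
    fin_cases i <;> simp only [Fin.reduceFinMk, μ, Matrix.cons_val, one_smul, neg_one_smul]
    · rw [hs0, hinvs₀]
    · rw [hs1, hinv, hδσ₂]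
    · rw [hs2, hinv, hδτ₁, hτ₁inv]
    · rw [hs3, hinv, hδτ₂, hτ₂inv]
    · rw [hs4, hinv, T.deltaNeg_mul, hδσ₂, hδτ₁, T.act_mul_apply, hτ₁inv, ← T.act_mul_apply]
    · rw [hs5, hinv, T.deltaNeg_mul, hδσ₂, hδτ₂, T.act_mul_apply, hτ₂inv, ← T.act_mul_apply]
    · rw [hs6, hinv, T.deltaNeg_mul, hδτ₁, hδτ₂, hτ₁τ₂]
    · rw [hs7, hinv, T.deltaNeg_mul, T.deltaNeg_mul, hδσ₂, hδτ₁, hδτ₂, mul_assoc, T.act_mul_apply,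
        hτ₁τ₂, map_neg, ← T.act_mul_apply, ← mul_assoc]
  have hplus : {i | μ i = 1} = ↑({0, 1, 2, 3, 4, 5} : Finset (Fin 8)) := by
    ext i; fin_cases i <;> simp [μ] <;> norm_num
  have hminus : {i | μ i = -1} = ↑({6, 7} : Finset (Fin 8)) := by
    ext i; fin_cases i <;> simp [μ] <;> norm_num
  let b := Basis.mk hbasis.1 hbasis.2.ge
  have hb : ⇑b = s := Basis.coe_mk _ _
  have hEplus := Module.End.eigenspace_eq_span_image b (f := T.inv) (hb ▸ hμ) 1
  have hEminus := Module.End.eigenspace_eq_span_image b (f := T.inv) (hb ▸ hμ) (-1)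
  rw [hb, hplus] at hEplus
  rw [hb, hminus] at hEminus
  refine ⟨?_, ?_, ?_, ?_⟩
  · simp [hEplus, Set.image_insert_eq]
  · simp [hEminus, Set.image_insert_eq]
  · rw [hEplus, hbasis.1.finrank_span_image_finset]; rfl
  · rw [hEminus, hbasis.1.finrank_span_image_finset]; rfl

theorem statement7 (T : SymmetricThetaActionSetup)
    -- `h⁰(L) = 1·2·4 = 8` (type `(1,2,4)` on an abelian 3-fold)
    (h0 : Module.finrank ℂ T.H0 = 8)
    -- `K(L) ≅ ℤ/2 ⊕ ℤ/4 ⊕ ℤ/2 ⊕ ℤ/4`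
    (hK : Nat.card T.K = 64)
    -- `L` is strongly symmetric
    (hstrong : ∀ g ∈ T.K, g + g = 0 → T.estar g = 1)
    -- lifts `σ'₁, σ'₂, τ'₁, τ'₂ ∈ 𝒢(L)` of generators `σ₁, σ₂, τ₁, τ₂` of
    -- `K(L) ≅ ℤ/2 ⊕ ℤ/4 ⊕ ℤ/2 ⊕ ℤ/4`, with `o(σ'ᵢ) = 2`, `o(τ'ᵢ) = 4`
    (σ₁' σ₂' τ₁' τ₂' : T.G)
    (hσ₁ : σ₁' * σ₁' = 1) (hσ₂ : σ₂' * σ₂' = 1)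
    (hσ₁0 : T.proj σ₁' ≠ 0) (hσ₂0 : T.proj σ₂' ≠ 0)
    (hτ₁ : τ₁' ^ 4 = 1) (hτ₂ : τ₂' ^ 4 = 1)
    (hτ₁o : τ₁' * τ₁' ≠ 1) (hτ₂o : τ₂' * τ₂' ≠ 1)
    (hτ₁sq0 : T.proj (τ₁' * τ₁') ≠ 0) (hτ₂sq0 : T.proj (τ₂' * τ₂') ≠ 0)
    -- `K(L)` is generated by `σ₁, τ₁, σ₂, τ₂`
    (hgen : T.K = AddSubgroup.closure {T.proj σ₁', T.proj τ₁', T.proj σ₂', T.proj τ₂'})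
    -- values of the Weil form: `e^L(σ₁,σ₂) = -1`, `e^L(τ₁,τ₂) = -i`,
    -- `e^L(σᵢ,τⱼ) = 1`
    (hw₁ : (T.weil (T.proj σ₁') (T.proj σ₂') : ℂ) = -1)
    (hw₂ : (T.weil (T.proj τ₁') (T.proj τ₂') : ℂ) = -Complex.I)
    (hw₃ : T.weil (T.proj σ₁') (T.proj τ₁') = 1)
    (hw₄ : T.weil (T.proj σ₁') (T.proj τ₂') = 1)
    (hw₅ : T.weil (T.proj σ₂') (T.proj τ₁') = 1)
    (hw₆ : T.weil (T.proj σ₂') (T.proj τ₂') = 1)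
    -- normalization of the lifts: `δ₋₁(σ'ⱼ) = σ'ⱼ` and `δ₋₁(τ'ⱼ) = (τ'ⱼ)⁻¹`
    (hδσ₁ : T.deltaNeg σ₁' = σ₁') (hδσ₂ : T.deltaNeg σ₂' = σ₂')
    (hδτ₁ : T.deltaNeg τ₁' = τ₁'⁻¹) (hδτ₂ : T.deltaNeg τ₂' = τ₂'⁻¹)
    -- `s₀` is a `G'`-invariant section, `G' = ⟨σ'₁, (τ'₁)², (τ'₂)²⟩`,
    -- with `i(s₀) = s₀`
    (s₀ : T.H0) (hs₀ : s₀ ≠ 0)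
    (hG' : ∀ z ∈ Subgroup.closure ({σ₁', τ₁' * τ₁', τ₂' * τ₂'} : Set T.G),
      T.act z s₀ = s₀)
    (hinvs₀ : T.inv s₀ = s₀)
    -- the resulting basis `s₀, …, s₇` of `H⁰(L)`
    (s : Fin 8 → T.H0)
    (hbasis : LinearIndependent ℂ s ∧ Submodule.span ℂ (Set.range s) = ⊤)
    (hs0 : s 0 = s₀)
    (hs1 : s 1 = T.act σ₂' s₀)
    (hs2 : s 2 = T.act τ₁' s₀)
    (hs3 : s 3 = T.act τ₂' s₀)
    (hs4 : s 4 = T.act (σ₂' * τ₁') s₀)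
    (hs5 : s 5 = T.act (σ₂' * τ₂') s₀)
    (hs6 : s 6 = T.act (τ₁' * τ₂') s₀)
    (hs7 : s 7 = T.act (σ₂' * τ₁' * τ₂') s₀) :
    -- `H⁰(L)⁺_i = ⟨s₀,…,s₅⟩`
    Module.End.eigenspace (↑T.inv : T.H0 →ₗ[ℂ] T.H0) 1
      = Submodule.span ℂ {s 0, s 1, s 2, s 3, s 4, s 5} ∧
    -- `H⁰(L)⁻_i = ⟨s₆,s₇⟩`
    Module.End.eigenspace (↑T.inv : T.H0 →ₗ[ℂ] T.H0) (-1)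
      = Submodule.span ℂ {s 6, s 7} ∧
    Module.finrank ℂ (Module.End.eigenspace (↑T.inv : T.H0 →ₗ[ℂ] T.H0) 1) = 6 ∧
    Module.finrank ℂ (Module.End.eigenspace (↑T.inv : T.H0 →ₗ[ℂ] T.H0) (-1)) = 2 :=
  statement7_general T σ₁' σ₂' τ₁' τ₂' hw₂ hδσ₂ hδτ₁ hδτ₂ s₀ hG' hinvs₀ s hbasis hs0 hs1 hs2 hs3 hs4
    hs5 hs6 hs7
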